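/- Let k ≥ 1, let a > 0, and let F : ℝ^k → ℝ be interchangeable (i.e., F(μ_{σ(1)},…,μ_{σ(k)}) = F(μ_1,…,μ_k) for every permutation σ of {1,…,k}) and twice continuously differentiable on a neighborhood of the diagonal point a·𝟙 = (a,…,a). Then there exist constants C > 0 and δ > 0 such that for every μ ∈ ℝ^k with μ_i > 0 for all i and ‖μ − a·𝟙‖ < δ, |F(μ) − F(μ_G·𝟙)| ≤ C‖μ − μ̄_A·𝟙‖², where μ_G = (∏_{i=1}^k μ_i)^{1/k} is the geometric mean and μ̄_A = (1/k)∑_{i=1}^k μ_i is the arithmetic mean of the coordinates of μ. -/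

import Mathlib

/-!
Taylor's formula at the diagonal point `m • 𝟙`, `m` the arithmetic mean of `μ`, gives
`F μ - F (m • 𝟙) = DF (m • 𝟙) (μ - m • 𝟙) + O(‖μ - m • 𝟙‖²)`, and the linear term vanishes:
by symmetry `DF` at a diagonal point is invariant under permutations of the coordinates, hence a
multiple of the coordinate sum, which is zero for `μ - m • 𝟙`. Applied to the geometric mean
itself (symmetric, smooth near `a • 𝟙` since `a > 0`, and equal to `t` at `t • 𝟙`) this gives
`μ_G - m = O(‖μ - m • 𝟙‖²)`; since `F` is locally Lipschitz, replacing `m` by `μ_G` costs only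
another `O(‖μ - m • 𝟙‖²)`.
-/

open Filter Topology Asymptotics Metric

section Taylor

variable {E F : Type*} [NormedAddCommGroup E] [NormedSpace ℝ E]
  [NormedAddCommGroup F] [NormedSpace ℝ F] {f : E → F}

theorem Convex.norm_image_sub_sub_fderiv_le {s : Set E} {K : NNReal} (hs : Convex ℝ s)
    (hf : ∀ x ∈ s, DifferentiableAt ℝ f x) (hf' : LipschitzOnWith K (fderiv ℝ f) s)
    {x y : E} (hx : x ∈ s) (hy : y ∈ s) :
    ‖f y - f x - fderiv ℝ f x (y - x)‖ ≤ K * ‖y - x‖ ^ 2 := by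
  have hseg : segment ℝ x y ⊆ s := hs.segment_subset hx hy
  have bound : ∀ z ∈ segment ℝ x y, ‖fderiv ℝ f z - fderiv ℝ f x‖ ≤ K * ‖y - x‖ :=
    fun z hz => calc
      ‖fderiv ℝ f z - fderiv ℝ f x‖ ≤ K * ‖z - x‖ := hf'.norm_sub_le (hseg hz) hx
      _ ≤ K * ‖y - x‖ := by gcongr; exact norm_sub_le_of_mem_segment hz
  calc ‖f y - f x - fderiv ℝ f x (y - x)‖ ≤ K * ‖y - x‖ * ‖y - x‖ :=
        (convex_segment x y).norm_image_sub_le_of_norm_hasFDerivWithin_le'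
          (fun z hz => (hf z (hseg hz)).hasFDerivAt.hasFDerivWithinAt) bound
          (left_mem_segment ℝ x y) (right_mem_segment ℝ x y)
    _ = K * ‖y - x‖ ^ 2 := by ring

theorem ContDiffAt.isBigO_sub_sub_fderiv {x₀ : E} (hf : ContDiffAt ℝ 2 f x₀) :
    (fun p : E × E => f p.2 - f p.1 - fderiv ℝ f p.1 (p.2 - p.1)) =O[𝓝 (x₀, x₀)]
      fun p => ‖p.2 - p.1‖ ^ 2 := by
  obtain ⟨K, t, ht, hK⟩ := (hf.fderiv_right (m := 1) le_rfl).exists_lipschitzOnWith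
  have hdiff : ∀ᶠ x in 𝓝 x₀, DifferentiableAt ℝ f x :=
    (hf.eventually (by simp)).mono fun x hx => hx.differentiableAt (by norm_num)
  obtain ⟨r, hr, hball⟩ := Metric.mem_nhds_iff.1 (inter_mem ht hdiff)
  refine IsBigO.of_bound K ?_
  filter_upwards [prod_mem_nhds (ball_mem_nhds x₀ hr) (ball_mem_nhds x₀ hr)] with p hp
  rw [norm_pow, norm_norm]
  exact (convex_ball x₀ r).norm_image_sub_sub_fderiv_le (fun x hx => (hball hx).2)
    (hK.mono fun x hx => (hball hx).1) hp.1 hp.2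

end Taylor

section Symmetric

variable {ι : Type*} [Fintype ι]

theorem LinearMap.apply_eq_zero_of_perm_invariant {M : Type*} [AddCommGroup M] [Module ℝ M]
    (φ : (ι → ℝ) →ₗ[ℝ] M) (hφ : ∀ (σ : Equiv.Perm ι) (v : ι → ℝ), φ (v ∘ σ) = φ v)
    {v : ι → ℝ} (hv : ∑ i, v i = 0) : φ v = 0 := by
  classical
  rcases isEmpty_or_nonempty ι with hι | ⟨⟨i₀⟩⟩
  · rw [Subsingleton.elim v 0, map_zero]
  have hbasis :
      ∀ i, (φ fun j => if i = j then 1 else 0) = φ fun j => if i₀ = j then 1 else 0 := by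
    intro i
    rw [← hφ (Equiv.swap i i₀)]
    congr 1
    funext j
    simp only [Function.comp_apply, Equiv.swap_apply_def]
    split_ifs <;> grind
  rw [φ.pi_apply_eq_sum_univ]
  simp only [hbasis, ← Finset.sum_smul, hv, zero_smul]

variable {E : Type*} [NormedAddCommGroup E] [NormedSpace ℝ E] {F : (ι → ℝ) → E}

theorem fderiv_comp_perm_of_perm_invariant
    (hF : ∀ (σ : Equiv.Perm ι) (μ : ι → ℝ), F (μ ∘ σ) = F μ) {c : ℝ} (σ : Equiv.Perm ι) (v : ι → ℝ) :
    fderiv ℝ F (fun _ => c) (v ∘ σ) = fderiv ℝ F (fun _ => c) v := by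
  by_cases hd : DifferentiableAt ℝ F (fun _ => c)
  · let L : (ι → ℝ) →L[ℝ] ι → ℝ := (LinearMap.funLeft ℝ ℝ σ).toContinuousLinearMap
    have hFL : F ∘ L = F := funext (hF σ)
    have hcomp : HasFDerivAt (F ∘ L) ((fderiv ℝ F fun _ => c).comp L) fun _ => c :=
      (hd.hasFDerivAt : HasFDerivAt F _ (L fun _ => c)).comp _ L.hasFDerivAt
    rw [hFL] at hcomp
    exact (DFunLike.congr_fun (hd.hasFDerivAt.unique hcomp) v).symm
  · simp only [fderiv_zero_of_not_differentiableAt hd, zero_apply]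

theorem fderiv_const_apply_eq_zero_of_sum_eq_zero
    (hF : ∀ (σ : Equiv.Perm ι) (μ : ι → ℝ), F (μ ∘ σ) = F μ) (c : ℝ)
    {v : ι → ℝ} (hv : ∑ i, v i = 0) : fderiv ℝ F (fun _ => c) v = 0 :=
  (fderiv ℝ F fun _ => c).toLinearMap.apply_eq_zero_of_perm_invariant
    (fderiv_comp_perm_of_perm_invariant hF) hv

noncomputable def arithMean (μ : ι → ℝ) : ℝ := (∑ i, μ i) / Fintype.card ι

noncomputable def geomMean (μ : ι → ℝ) : ℝ := (∏ i, μ i) ^ ((1 : ℝ) / Fintype.card ι)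

theorem continuous_arithMean : Continuous (arithMean : (ι → ℝ) → ℝ) := by
  unfold arithMean
  fun_prop

theorem geomMean_comp_perm (σ : Equiv.Perm ι) (μ : ι → ℝ) : geomMean (μ ∘ σ) = geomMean μ := by
  simp only [geomMean, Function.comp_apply, Equiv.prod_comp]

theorem contDiffAt_geomMean {n : WithTop ℕ∞} {μ : ι → ℝ} (hμ : ∏ i, μ i ≠ 0) :
    ContDiffAt ℝ n geomMean μ :=
  (Real.contDiffAt_rpow_const_of_ne hμ).comp μ
    (contDiffAt_prod fun i _ => (contDiff_apply ℝ ℝ i).contDiffAt)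

variable [Nonempty ι]

theorem arithMean_const (c : ℝ) : arithMean (fun _ : ι => c) = c := by
  simp [arithMean]

theorem sum_sub_arithMean (μ : ι → ℝ) : ∑ i, (μ i - arithMean μ) = 0 := by
  have hcard : (Fintype.card ι : ℝ) ≠ 0 := Nat.cast_ne_zero.2 Fintype.card_ne_zero
  simp [arithMean, Finset.sum_sub_distrib, mul_div_cancel₀ _ hcard]

theorem geomMean_const {c : ℝ} (hc : 0 ≤ c) : geomMean (fun _ : ι => c) = c := by
  simp [geomMean, Real.pow_rpow_inv_natCast hc Fintype.card_ne_zero]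

variable {a : ℝ}

theorem tendsto_arithMean_nhds_const : Tendsto arithMean (𝓝 fun _ : ι => a) (𝓝 a) := by
  simpa [arithMean_const] using continuous_arithMean.tendsto (fun _ : ι => a)

theorem tendsto_const_arithMean_nhds_const :
    Tendsto (fun (μ : ι → ℝ) (_ : ι) => arithMean μ) (𝓝 fun _ => a) (𝓝 fun _ => a) :=
  tendsto_pi_nhds.2 fun _ => tendsto_arithMean_nhds_const

theorem isBigO_sub_apply_const_arithMean
    (hFsymm : ∀ (σ : Equiv.Perm ι) (μ : ι → ℝ), F (μ ∘ σ) = F μ)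
    (hF : ContDiffAt ℝ 2 F fun _ => a) :
    (fun μ => F μ - F fun _ => arithMean μ) =O[𝓝 fun _ => a]
      fun μ => ‖μ - fun _ => arithMean μ‖ ^ 2 := by
  refine (hF.isBigO_sub_sub_fderiv.comp_tendsto
    (tendsto_const_arithMean_nhds_const.prodMk_nhds tendsto_id)).congr_left fun μ => ?_
  have hfderiv : fderiv ℝ F (fun _ => arithMean μ) (μ - fun _ => arithMean μ) = 0 :=
    fderiv_const_apply_eq_zero_of_sum_eq_zero hFsymm _ (sum_sub_arithMean μ)
  simp only [Function.comp_apply, id_eq, hfderiv, sub_zero]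

theorem isBigO_sub_apply_const_of_symmetric_mean
    (hFsymm : ∀ (σ : Equiv.Perm ι) (μ : ι → ℝ), F (μ ∘ σ) = F μ)
    (hF : ContDiffAt ℝ 2 F fun _ => a) {M : (ι → ℝ) → ℝ}
    (hMsymm : ∀ (σ : Equiv.Perm ι) (μ : ι → ℝ), M (μ ∘ σ) = M μ)
    (hM : ContDiffAt ℝ 2 M fun _ => a) (hMconst : ∀ᶠ t in 𝓝 a, M (fun _ => t) = t) :
    (fun μ => F μ - F fun _ => M μ) =O[𝓝 fun _ => a]
      fun μ => ‖μ - fun _ => arithMean μ‖ ^ 2 := by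
  have hMmean : (fun μ => arithMean μ - M μ) =O[𝓝 fun _ => a]
      fun μ => ‖μ - fun _ => arithMean μ‖ ^ 2 := by
    refine (isBigO_sub_apply_const_arithMean hMsymm hM).neg_left.congr' ?_ (.refl _ _)
    filter_upwards [tendsto_arithMean_nhds_const.eventually hMconst] with μ hμ
    simp [hμ]
  have hMtendsto : Tendsto (fun μ => fun _ : ι => M μ) (𝓝 fun _ => a) (𝓝 fun _ => a) := by
    have hMa : Tendsto M (𝓝 fun _ => a) (𝓝 a) := by
      simpa only [hMconst.self_of_nhds] using hM.continuousAt.tendsto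
    exact tendsto_pi_nhds.2 fun _ => hMa
  have hdiag : (fun μ => (F fun _ => arithMean μ) - F fun _ => M μ) =O[𝓝 fun _ => a]
      fun μ => arithMean μ - M μ := by
    refine ((hF.hasStrictFDerivAt two_ne_zero).isBigO_sub.comp_tendsto
      (tendsto_const_arithMean_nhds_const.prodMk_nhds hMtendsto)).trans ?_
    exact IsBigO.of_bound 1 (.of_forall fun μ => by
      rw [one_mul]; exact pi_norm_const_le (arithMean μ - M μ))
  exact ((isBigO_sub_apply_const_arithMean hFsymm hF).add (hdiag.trans hMmean)).congr_left
    fun μ => sub_add_sub_cancel _ _ _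

end Symmetric

/-- **Corollary 2 of the paper (geometric mean version)**: the Averaging Principle remains
valid when the arithmetic mean is replaced with the geometric mean. -/
theorem averaging_principle_geometric (k : ℕ) (hk : 1 ≤ k) (a : ℝ) (ha : 0 < a)
    (F : (Fin k → ℝ) → ℝ)
    (hsym : ∀ (σ : Equiv.Perm (Fin k)) (μ : Fin k → ℝ), F (μ ∘ σ) = F μ)
    (hF : ContDiffAt ℝ 2 F (fun _ => a)) :
    ∃ C > (0:ℝ), ∃ δ > (0:ℝ), ∀ μ : Fin k → ℝ,
      (∀ i, 0 < μ i) → ‖μ - (fun _ => a)‖ < δ →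
      |F μ - F (fun _ => (∏ i, μ i) ^ ((1 : ℝ) / k))| ≤
        C * ‖μ - (fun _ => (∑ i, μ i) / k)‖ ^ 2 := by
  have : Nonempty (Fin k) := ⟨⟨0, hk⟩⟩
  have hgeom : ContDiffAt ℝ 2 geomMean fun _ : Fin k => a :=
    contDiffAt_geomMean (by simp [ha.ne'])
  have hgeom_const : ∀ᶠ t in 𝓝 a, geomMean (fun _ : Fin k => t) = t :=
    (lt_mem_nhds ha).mono fun t ht => geomMean_const ht.le
  obtain ⟨C, hC, hbound⟩ := (isBigO_sub_apply_const_of_symmetric_mean hsym hF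
    geomMean_comp_perm hgeom hgeom_const).exists_pos
  obtain ⟨δ, hδ, hδbound⟩ := Metric.eventually_nhds_iff.1 hbound.bound
  refine ⟨C, hC, δ, hδ, fun μ _ hμ => ?_⟩
  simpa [geomMean, arithMean] using hδbound (by rwa [dist_eq_norm])
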